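/- Let P and Q be irreducible and reversible with respect to π, with eigenvalues 1 = λ_1 ≥ λ_2 ≥ … ≥ λ_n for P and 1 = β_1 ≥ β_2 ≥ … ≥ β_n for Q. If λ_2 ≤ β_n (i.e., every non-trivial eigenvalue of P is at most every non-trivial eigenvalue of Q), then P efficiency-dominates Q. -/

import Mathlib

open Matrix BigOperators Filter

def IsStochastic {n : ℕ} (P : Matrix (Fin n) (Fin n) ℝ) : Prop :=
  (∀ x y, 0 ≤ P x y) ∧ ∀ x, ∑ y, P x y = 1

def IsReversible {n : ℕ} (π : Fin n → ℝ) (P : Matrix (Fin n) (Fin n) ℝ) : Prop :=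
  ∀ x y, π x * P x y = π y * P y x

def MatIrreducible {n : ℕ} (P : Matrix (Fin n) (Fin n) ℝ) : Prop :=
  ∀ x y, ∃ k : ℕ, 0 < (P ^ k) x y

noncomputable def pInner {n : ℕ} (π f g : Fin n → ℝ) : ℝ := ∑ x, f x * g x * π x

noncomputable def autocov {n : ℕ} (π : Fin n → ℝ) (P : Matrix (Fin n) (Fin n) ℝ)
    (f : Fin n → ℝ) (k : ℕ) : ℝ :=
  ∑ x, ∑ y, π x * (f x - ∑ z, π z * f z) * (P ^ k) x y * (f y - ∑ z, π z * f z)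

noncomputable def varN {n : ℕ} (π : Fin n → ℝ) (P : Matrix (Fin n) (Fin n) ℝ)
    (f : Fin n → ℝ) (N : ℕ) : ℝ :=
  ((N : ℝ))⁻¹ * ∑ i ∈ Finset.range N, ∑ j ∈ Finset.range N,
    autocov π P f (max i j - min i j)

def HasAsymptVar {n : ℕ} (π : Fin n → ℝ) (P : Matrix (Fin n) (Fin n) ℝ)
    (f : Fin n → ℝ) (v : ℝ) : Prop :=
  Tendsto (varN π P f) atTop (nhds v)

def EffDom {n : ℕ} (π : Fin n → ℝ) (P Q : Matrix (Fin n) (Fin n) ℝ) : Prop :=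
  ∀ (f : Fin n → ℝ) (vP vQ : ℝ),
    HasAsymptVar π P f vP → HasAsymptVar π Q f vQ → vP ≤ vQ

/-!
In a `π`-orthonormal eigenbasis `(v t)` of `P` with eigenvalues `λ t`, the lag-`k` autocovariance
of `f` is `∑ c_t² λ_t^k` with `c_t = ⟨f - π f, v t⟩_π`, so the averaged variance at time `N` is
`∑ c_t² G(λ_t, N)` with `G(l, N) = N⁻¹ ∑_{i,j<N} l^|i-j|`. Since `G(l, N) → (1 + l)/(1 - l)` for
`-1 ≤ l < 1` while `G(1, N) = N`, a finite asymptotic variance forces `c_t = 0` whenever `λ_t = 1`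
and equals `∑ c_t² (1 + λ_t)/(1 - λ_t)`. The weights `c_t²` have the same total `‖f - π f‖²_π` for
`P` and `Q` (Parseval), every eigenvalue of `P` carrying weight lies below every eigenvalue of `Q`
carrying weight, and `l ↦ (1 + l)/(1 - l)` is increasing; so the `P`-sum is at most the `Q`-sum.
-/

open Finset Filter Topology

noncomputable def geomKernelAvg (l : ℝ) (N : ℕ) : ℝ :=
  (N : ℝ)⁻¹ * ∑ i ∈ range N, ∑ j ∈ range N, l ^ (max i j - min i j)

noncomputable def autocorrFactor (l : ℝ) : ℝ := (1 + l) / (1 - l)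

lemma autocorrFactor_mono {a b : ℝ} (hab : a ≤ b) (hb : b < 1) :
    autocorrFactor a ≤ autocorrFactor b := by
  rw [autocorrFactor, autocorrFactor, div_le_div_iff₀ (by linarith) (by linarith)]
  nlinarith

lemma sum_range_pow_sub_mul (l : ℝ) (N : ℕ) :
    (∑ i ∈ range N, l ^ (N - i)) * (1 - l) = l * (1 - l ^ N) := by
  induction N with
  | zero => simp
  | succ N ih =>
    have hshift : ∑ i ∈ range (N + 1), l ^ (N + 1 - i) = l * (∑ i ∈ range N, l ^ (N - i) + 1) := by
      rw [mul_add, mul_sum, sum_range_succ, Nat.add_sub_cancel_left, pow_one, mul_one]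
      congr 1
      refine sum_congr rfl fun i hi => ?_
      rw [Nat.sub_add_comm (mem_range.1 hi).le, pow_succ']
    rw [hshift, mul_assoc, add_mul, ih]
    ring

lemma sum_range_pow_dist_succ (l : ℝ) (N : ℕ) :
    ∑ i ∈ range (N + 1), ∑ j ∈ range (N + 1), l ^ (max i j - min i j)
      = ∑ i ∈ range N, ∑ j ∈ range N, l ^ (max i j - min i j)
        + 2 * ∑ i ∈ range N, l ^ (N - i) + 1 := by
  have hrow : ∀ i ∈ range N, l ^ (max i N - min i N) = l ^ (N - i) := fun i hi => by
    rw [max_eq_right (mem_range.1 hi).le, min_eq_left (mem_range.1 hi).le]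
  have hcol : ∀ j ∈ range N, l ^ (max N j - min N j) = l ^ (N - j) := fun j hj => by
    rw [max_eq_left (mem_range.1 hj).le, min_eq_right (mem_range.1 hj).le]
  simp only [sum_range_succ, sum_add_distrib, sum_congr rfl hrow, sum_congr rfl hcol,
    max_self, min_self, Nat.sub_self, pow_zero]
  ring

lemma sum_range_pow_dist_mul (l : ℝ) (N : ℕ) :
    (∑ i ∈ range N, ∑ j ∈ range N, l ^ (max i j - min i j)) * (1 - l) ^ 2
      = N * (1 - l ^ 2) - 2 * l * (1 - l ^ N) := by
  induction N with
  | zero => simp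
  | succ N ih =>
    rw [sum_range_pow_dist_succ]
    push_cast
    linear_combination ih + 2 * (1 - l) * sum_range_pow_sub_mul l N

lemma geomKernelAvg_one (N : ℕ) : geomKernelAvg 1 N = N := by
  rcases N.eq_zero_or_pos with rfl | hN
  · simp [geomKernelAvg]
  · simp [geomKernelAvg, hN.ne']

lemma tendsto_geomKernelAvg {l : ℝ} (hl : |l| ≤ 1) (hl1 : l < 1) :
    Tendsto (geomKernelAvg l) atTop (𝓝 (autocorrFactor l)) := by
  have hpos : 0 < 1 - l := by linarith
  have hclosed : ∀ N : ℕ, 1 ≤ N → geomKernelAvg l N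
      = autocorrFactor l - 2 * l / (1 - l) ^ 2 * ((1 - l ^ N) / N) := fun N hN => by
    have hS := sum_range_pow_dist_mul l N
    have hN' : (N : ℝ) ≠ 0 := by positivity
    rw [geomKernelAvg, autocorrFactor]
    field_simp
    linear_combination hS
  have hbound : Tendsto (fun N : ℕ => (1 - l ^ N) / N) atTop (𝓝 0) := by
    refine squeeze_zero_norm (fun N => ?_) (tendsto_const_div_atTop_nhds_zero_nat 2)
    rw [norm_div, Real.norm_natCast]
    gcongr
    have hpow : |l ^ N| ≤ 1 := by rw [abs_pow]; exact pow_le_one₀ (abs_nonneg l) hl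
    rw [Real.norm_eq_abs, abs_le]
    constructor <;> linarith [abs_le.1 hpow]
  have hlim : Tendsto (fun N : ℕ => autocorrFactor l - 2 * l / (1 - l) ^ 2 * ((1 - l ^ N) / N))
      atTop (𝓝 (autocorrFactor l - 2 * l / (1 - l) ^ 2 * 0)) :=
    tendsto_const_nhds.sub (tendsto_const_nhds.mul hbound)
  rw [mul_zero, sub_zero] at hlim
  exact hlim.congr' ((eventually_ge_atTop 1).mono fun N hN => (hclosed N hN).symm)

lemma sum_mul_le_sum_mul_of_sum_eq {ι : Type*} (s : Finset ι) {a b x y : ι → ℝ}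
    (ha : ∀ i, 0 ≤ a i) (hb : ∀ j, 0 ≤ b j) (hab : ∑ i ∈ s, a i = ∑ j ∈ s, b j)
    (hxy : ∀ i j, a i ≠ 0 → b j ≠ 0 → x i ≤ y j) :
    ∑ i ∈ s, a i * x i ≤ ∑ j ∈ s, b j * y j := by
  rcases (sum_nonneg fun i _ => ha i : 0 ≤ ∑ i ∈ s, a i).eq_or_lt with hS | hS
  · have ha0 := (sum_eq_zero_iff_of_nonneg fun i _ => ha i).1 hS.symm
    have hb0 := (sum_eq_zero_iff_of_nonneg fun j _ => hb j).1 (hab ▸ hS.symm)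
    rw [sum_eq_zero fun i hi => by rw [ha0 i hi, zero_mul],
      sum_eq_zero fun j hj => by rw [hb0 j hj, zero_mul]]
  · have hpair : ∀ i j, a i * x i * b j ≤ a i * (b j * y j) := fun i j => by
      by_cases hai : a i = 0
      · simp [hai]
      by_cases hbj : b j = 0
      · simp [hbj]
      have := mul_le_mul_of_nonneg_left (hxy i j hai hbj) (mul_nonneg (ha i) (hb j))
      linarith
    refine le_of_mul_le_mul_right ?_ hS
    calc (∑ i ∈ s, a i * x i) * ∑ i ∈ s, a i
        = ∑ i ∈ s, ∑ j ∈ s, a i * x i * b j := by rw [hab, sum_mul_sum]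
      _ ≤ ∑ i ∈ s, ∑ j ∈ s, a i * (b j * y j) :=
        sum_le_sum fun i _ => sum_le_sum fun j _ => hpair i j
      _ = (∑ j ∈ s, b j * y j) * ∑ i ∈ s, a i := by rw [← sum_mul_sum, mul_comm]

lemma eq_sum_of_tendsto_sum_geomKernelAvg {ι : Type*} [Fintype ι] {a l : ι → ℝ} {w : ℝ}
    (ha : ∀ t, 0 ≤ a t) (hl : ∀ t, |l t| ≤ 1)
    (hw : Tendsto (fun N => ∑ t, a t * geomKernelAvg (l t) N) atTop (𝓝 w)) :
    (∀ t, a t ≠ 0 → l t < 1) ∧ w = ∑ t, a t * autocorrFactor (l t) := by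
  classical
  set s := univ.filter fun t => l t = 1
  set r := ∑ t ∈ univ.filter (fun t => l t ≠ 1), a t * autocorrFactor (l t)
  have hsplit : ∀ N : ℕ, ∑ t, a t * geomKernelAvg (l t) N
      = (∑ t ∈ s, a t) * N + ∑ t ∈ univ.filter (fun t => l t ≠ 1), a t * geomKernelAvg (l t) N :=
    fun N => by
      rw [← sum_filter_add_sum_filter_not univ (fun t => l t = 1), sum_mul]
      congr 1
      refine sum_congr rfl fun t ht => ?_
      rw [(mem_filter.1 ht).2, geomKernelAvg_one]
  have hrest : Tendsto (fun N => ∑ t ∈ univ.filter (fun t => l t ≠ 1),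
      a t * geomKernelAvg (l t) N) atTop (𝓝 r) :=
    tendsto_finsetSum _ fun t ht => (tendsto_geomKernelAvg (hl t)
      (lt_of_le_of_ne (abs_le.1 (hl t)).2 (mem_filter.1 ht).2)).const_mul (a t)
  -- the terms with `l t = 1` grow linearly in `N`, so their total weight must vanish
  have hlin : Tendsto (fun N : ℕ => (∑ t ∈ s, a t) * N * (N : ℝ)⁻¹) atTop (𝓝 ((w - r) * 0)) := by
    refine ((hw.sub hrest).congr fun N => ?_).mul tendsto_inv_atTop_nhds_zero_nat
    rw [hsplit]; ring
  have hA : ∑ t ∈ s, a t = 0 := by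
    rw [mul_zero] at hlin
    refine tendsto_nhds_unique (tendsto_const_nhds.congr' ?_) hlin
    filter_upwards [eventually_ge_atTop 1] with N hN
    have : (N : ℝ) ≠ 0 := by positivity
    field_simp
  have ha1 : ∀ t, l t = 1 → a t = 0 := fun t ht =>
    (sum_eq_zero_iff_of_nonneg fun t _ => ha t).1 hA t (mem_filter.2 ⟨mem_univ t, ht⟩)
  refine ⟨fun t hat => (abs_le.1 (hl t)).2.lt_of_ne fun h => hat (ha1 t h),
    tendsto_nhds_unique hw ?_⟩
  rw [← sum_filter_add_sum_filter_not univ (fun t => l t = 1),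
    sum_eq_zero fun t ht => by rw [ha1 t (mem_filter.1 ht).2, zero_mul], zero_add]
  simpa [hsplit, hA] using hrest

def WeightedOrthonormal {n : ℕ} (π : Fin n → ℝ) (v : Fin n → Fin n → ℝ) : Prop :=
  ∀ i j, pInner π (v i) (v j) = if i = j then 1 else 0

noncomputable def centered {n : ℕ} (π f : Fin n → ℝ) : Fin n → ℝ :=
  fun x => f x - ∑ z, π z * f z

section Spectral

variable {n : ℕ} {π : Fin n → ℝ}

lemma pInner_sum_right {ι : Type*} (s : Finset ι) (g : Fin n → ℝ) (F : ι → Fin n → ℝ) :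
    pInner π g (∑ t ∈ s, F t) = ∑ t ∈ s, pInner π g (F t) := by
  simp only [pInner, Finset.sum_apply, mul_sum, sum_mul]
  exact sum_comm

lemma pInner_smul_right (g w : Fin n → ℝ) (c : ℝ) : pInner π g (c • w) = c * pInner π g w := by
  simp only [pInner, Pi.smul_apply, smul_eq_mul, mul_sum]
  exact sum_congr rfl fun x _ => by ring

lemma IsStochastic.norm_mulVec_le {P : Matrix (Fin n) (Fin n) ℝ} (hP : IsStochastic P)
    (v : Fin n → ℝ) : ‖P *ᵥ v‖ ≤ ‖v‖ :=
  (pi_norm_le_iff_of_nonneg (norm_nonneg v)).2 fun x => calc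
    ‖(P *ᵥ v) x‖ = |∑ y, P x y * v y| := rfl
    _ ≤ ∑ y, |P x y * v y| := abs_sum_le_sum_abs _ _
    _ ≤ ∑ y, P x y * ‖v‖ := sum_le_sum fun y _ => by
      rw [abs_mul, abs_of_nonneg (hP.1 x y)]
      exact mul_le_mul_of_nonneg_left (norm_le_pi_norm v y) (hP.1 x y)
    _ = ‖v‖ := by rw [← sum_mul, hP.2 x, one_mul]

lemma IsStochastic.abs_le_one_of_mulVec_eq_smul {P : Matrix (Fin n) (Fin n) ℝ}
    (hP : IsStochastic P) {v : Fin n → ℝ} {μ : ℝ} (hv : P *ᵥ v = μ • v) (hv0 : v ≠ 0) :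
    |μ| ≤ 1 := by
  have h := hP.norm_mulVec_le v
  rw [hv, norm_smul, Real.norm_eq_abs] at h
  exact (mul_le_iff_le_one_left (norm_pos_iff.2 hv0)).1 h

lemma mulVec_pow_of_mulVec_eq_smul {A : Matrix (Fin n) (Fin n) ℝ} {v : Fin n → ℝ} {μ : ℝ}
    (hv : A *ᵥ v = μ • v) (k : ℕ) : (A ^ k) *ᵥ v = μ ^ k • v := by
  induction k with
  | zero => simp
  | succ k ih => rw [pow_succ', ← mulVec_mulVec, ih, mulVec_smul, hv, smul_smul, pow_succ]

namespace WeightedOrthonormal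

variable {v : Fin n → Fin n → ℝ}

lemma ne_zero (hv : WeightedOrthonormal π v) (t : Fin n) : v t ≠ 0 := fun h0 => by
  simpa [pInner, h0] using hv t t

-- orthonormality says `A * Bᵀ = 1` for the square matrices `A = (v t x * π x)` and `B = (v t x)`
lemma sum_mul_mul (hv : WeightedOrthonormal π v) (x y : Fin n) :
    ∑ t, v t x * (v t y * π y) = if x = y then 1 else 0 := by
  have hAB : (Matrix.of fun t y => v t y * π y) * (Matrix.of v)ᵀ = 1 := by
    ext i j
    rw [Matrix.mul_apply, Matrix.one_apply, ← hv i j, pInner]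
    exact sum_congr rfl fun x _ => by simp only [Matrix.of_apply, Matrix.transpose_apply]; ring
  have hBA : (Matrix.of v)ᵀ * (Matrix.of fun t y => v t y * π y) = 1 := mul_eq_one_comm.1 hAB
  simpa [Matrix.mul_apply, Matrix.one_apply] using congrFun (congrFun hBA x) y

lemma sum_pInner_smul (hv : WeightedOrthonormal π v) (g : Fin n → ℝ) :
    ∑ t, pInner π g (v t) • v t = g := by
  ext x
  simp only [Finset.sum_apply, Pi.smul_apply, smul_eq_mul, pInner, sum_mul]
  rw [sum_comm]
  have hcol : ∀ y, ∑ t, g y * v t y * π y * v t x = g y * if x = y then 1 else 0 := fun y => by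
    rw [← hv.sum_mul_mul, mul_sum]
    exact sum_congr rfl fun t _ => by ring
  simp [hcol]

lemma pInner_mulVec (hv : WeightedOrthonormal π v) {A : Matrix (Fin n) (Fin n) ℝ}
    {μ : Fin n → ℝ} (hA : ∀ t, A *ᵥ v t = μ t • v t) (g : Fin n → ℝ) :
    pInner π g (A *ᵥ g) = ∑ t, pInner π g (v t) ^ 2 * μ t := by
  have hAg : A *ᵥ g = ∑ t, (pInner π g (v t) * μ t) • v t := by
    conv_lhs => rw [← hv.sum_pInner_smul g]
    simp only [mulVec_sum, mulVec_smul, hA, smul_smul]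
  rw [hAg, pInner_sum_right]
  exact sum_congr rfl fun t _ => by rw [pInner_smul_right]; ring

lemma sum_sq_pInner (hv : WeightedOrthonormal π v) (g : Fin n → ℝ) :
    ∑ t, pInner π g (v t) ^ 2 = pInner π g g := by
  simpa using (hv.pInner_mulVec (A := 1) (μ := 1) (by simp) g).symm

end WeightedOrthonormal

end Spectral

section Chain

variable {n : ℕ} {π : Fin n → ℝ} {P : Matrix (Fin n) (Fin n) ℝ} {v : Fin n → Fin n → ℝ}
  {lam : Fin n → ℝ}

lemma autocov_eq_pInner (f : Fin n → ℝ) (k : ℕ) :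
    autocov π P f k = pInner π (centered π f) ((P ^ k) *ᵥ centered π f) := by
  simp only [autocov, pInner, centered, mulVec, dotProduct, mul_sum, sum_mul]
  exact sum_congr rfl fun x _ => sum_congr rfl fun y _ => by ring

lemma WeightedOrthonormal.autocov_eq_sum (hv : WeightedOrthonormal π v)
    (heig : ∀ t, P *ᵥ v t = lam t • v t) (f : Fin n → ℝ) (k : ℕ) :
    autocov π P f k = ∑ t, pInner π (centered π f) (v t) ^ 2 * lam t ^ k := by
  rw [autocov_eq_pInner, hv.pInner_mulVec fun t => mulVec_pow_of_mulVec_eq_smul (heig t) k]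

lemma WeightedOrthonormal.varN_eq_sum (hv : WeightedOrthonormal π v)
    (heig : ∀ t, P *ᵥ v t = lam t • v t) (f : Fin n → ℝ) (N : ℕ) :
    varN π P f N = ∑ t, pInner π (centered π f) (v t) ^ 2 * geomKernelAvg (lam t) N := by
  simp only [varN, geomKernelAvg, hv.autocov_eq_sum heig, mul_sum]
  refine (sum_congr rfl fun i _ => sum_comm).trans (sum_comm.trans ?_)
  exact sum_congr rfl fun t _ => sum_congr rfl fun i _ => sum_congr rfl fun j _ => by ring

lemma HasAsymptVar.eq_sum_autocorrFactor (hP : IsStochastic P) (hv : WeightedOrthonormal π v)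
    (heig : ∀ t, P *ᵥ v t = lam t • v t) {f : Fin n → ℝ} {w : ℝ} (hw : HasAsymptVar π P f w) :
    (∀ t, pInner π (centered π f) (v t) ≠ 0 → lam t < 1) ∧
      w = ∑ t, pInner π (centered π f) (v t) ^ 2 * autocorrFactor (lam t) := by
  have hlam : ∀ t, |lam t| ≤ 1 := fun t => hP.abs_le_one_of_mulVec_eq_smul (heig t) (hv.ne_zero t)
  obtain ⟨hlt, rfl⟩ := eq_sum_of_tendsto_sum_geomKernelAvg (fun t => sq_nonneg _) hlam
    (hw.congr (hv.varN_eq_sum heig f))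
  exact ⟨fun t ht => hlt t (pow_ne_zero 2 ht), rfl⟩

end Chain

theorem stmt12_general {n : ℕ} [NeZero n] (π : Fin n → ℝ) (P Q : Matrix (Fin n) (Fin n) ℝ)
    (hP : IsStochastic P) (hQ : IsStochastic Q)
    (vP vQ : Fin n → Fin n → ℝ) (lam beta : Fin n → ℝ)
    (horthoP : ∀ i j, pInner π (vP i) (vP j) = if i = j then 1 else 0)
    (horthoQ : ∀ i j, pInner π (vQ i) (vQ j) = if i = j then 1 else 0)
    (heigP : ∀ i, P.mulVec (vP i) = lam i • vP i)
    (heigQ : ∀ i, Q.mulVec (vQ i) = beta i • vQ i)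
    (hlam1 : lam 0 = 1) (hbeta1 : beta 0 = 1)
    (hsep : ∀ i j : Fin n, i ≠ 0 → j ≠ 0 → lam i ≤ beta j) :
    EffDom π P Q := by
  intro f wP wQ hwP hwQ
  obtain ⟨hltP, rfl⟩ := hwP.eq_sum_autocorrFactor hP horthoP heigP
  obtain ⟨hltQ, rfl⟩ := hwQ.eq_sum_autocorrFactor hQ horthoQ heigQ
  have hmass : ∑ t, pInner π (centered π f) (vP t) ^ 2 = ∑ t, pInner π (centered π f) (vQ t) ^ 2 :=
    (WeightedOrthonormal.sum_sq_pInner horthoP _).trans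
      (WeightedOrthonormal.sum_sq_pInner horthoQ _).symm
  refine sum_mul_le_sum_mul_of_sum_eq univ (fun _ => sq_nonneg _) (fun _ => sq_nonneg _) hmass
    fun t s ht hs => ?_
  have hlt : lam t < 1 := hltP t (pow_ne_zero_iff two_ne_zero |>.1 ht)
  have hbs : beta s < 1 := hltQ s (pow_ne_zero_iff two_ne_zero |>.1 hs)
  have ht0 : t ≠ 0 := by rintro rfl; exact hlt.ne hlam1
  have hs0 : s ≠ 0 := by rintro rfl; exact hbs.ne hbeta1
  exact autocorrFactor_mono (hsep t s ht0 hs0) hbs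

theorem stmt12 {n : ℕ} [NeZero n] (π : Fin n → ℝ) (P Q : Matrix (Fin n) (Fin n) ℝ)
    (hπpos : ∀ x, 0 < π x) (hπsum : ∑ x, π x = 1)
    (hP : IsStochastic P) (hQ : IsStochastic Q)
    (hirrP : MatIrreducible P) (hirrQ : MatIrreducible Q)
    (hrevP : IsReversible π P) (hrevQ : IsReversible π Q)
    (vP vQ : Fin n → Fin n → ℝ) (lam beta : Fin n → ℝ)
    (horthoP : ∀ i j, pInner π (vP i) (vP j) = if i = j then 1 else 0)
    (horthoQ : ∀ i j, pInner π (vQ i) (vQ j) = if i = j then 1 else 0)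
    (heigP : ∀ i, P.mulVec (vP i) = lam i • vP i)
    (heigQ : ∀ i, Q.mulVec (vQ i) = beta i • vQ i)
    (hlam : Antitone lam) (hbeta : Antitone beta)
    (hlam1 : lam 0 = 1) (hbeta1 : beta 0 = 1)
    (hsep : ∀ i j : Fin n, i ≠ 0 → j ≠ 0 → lam i ≤ beta j) :
    EffDom π P Q :=
  stmt12_general π P Q hP hQ vP vQ lam beta horthoP horthoQ heigP heigQ hlam1 hbeta1 hsep
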